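/- arXiv:1111.1851 — 2 statements merged into one kernel-verified Lean document; each statement's English description precedes it below -/
import Mathlib

section
/- Let H ∈ (1/2, 1) and define ρ(u) = (u^{-H} + u^{H} - u^{-H}(1-u)^{2H})/2 for u ∈ (0,1). Then 1 - ρ(u) = u^{-H}((1-u)^{2H} - (1-u^H)^2)/2, and there is a constant C (depending only on H) such that 1 - ρ(u) ≤ C(1-u)^{2H} for all u ∈ [1/2, 1). -/
open Real Set

/-- Normalized correlation `ρ(u) = u^{-H} E[B^H_u B^H_1]` of fBm at times `u` and `1`. -/
noncomputable def fbmRho (H u : ℝ) : ℝ :=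
  (u ^ (-H) + u ^ H - u ^ (-H) * (1 - u) ^ (2 * H)) / 2

/-- For `H ∈ (1/2,1)`, one has the identity
`1 - ρ(u) = u^{-H}((1-u)^{2H} - (1-u^H)^2)/2`, and there is a constant `C`
(depending only on `H`) with `1 - ρ(u) ≤ C (1-u)^{2H}` for `u ∈ [1/2, 1)`. -/
theorem one_sub_fbmRho_bound (H : ℝ) (hH : H ∈ Set.Ioo (1 / 2 : ℝ) 1) :
    (∀ u ∈ Set.Ioo (0 : ℝ) 1,
      1 - fbmRho H u = u ^ (-H) * ((1 - u) ^ (2 * H) - (1 - u ^ H) ^ 2) / 2) ∧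
    ∃ C : ℝ, ∀ u ∈ Set.Ico (1 / 2 : ℝ) 1,
      1 - fbmRho H u ≤ C * (1 - u) ^ (2 * H) := by
  obtain ⟨hH1, hH2⟩ := hH
  constructor
  · rintro u ⟨hu0, hu1⟩
    have hab : u ^ (-H) * u ^ H = 1 := by
      rw [← Real.rpow_add hu0]; simp
    unfold fbmRho
    linear_combination (u ^ H - 2) / 2 * hab
  · refine ⟨2 ^ H / 2, fun u hu => ?_⟩
    obtain ⟨hu0, hu1⟩ := hu
    have hu0' : (0:ℝ) < u := by linarith
    have hab : u ^ (-H) * u ^ H = 1 := by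
      rw [← Real.rpow_add hu0']; simp
    have hid : 1 - fbmRho H u = u ^ (-H) * ((1 - u) ^ (2 * H) - (1 - u ^ H) ^ 2) / 2 := by
      unfold fbmRho; linear_combination (u ^ H - 2) / 2 * hab
    rw [hid]
    have key : ((1/2:ℝ)) ^ (-H) = 2 ^ H := by
      rw [one_div, Real.inv_rpow (by norm_num), ← Real.rpow_neg (by norm_num), neg_neg]
    have hle : u ^ (-H) ≤ 2 ^ H := by
      rw [← key]
      exact Real.rpow_le_rpow_of_nonpos (by norm_num) hu0 (by linarith)
    have hnn : 0 ≤ (1 - u) ^ (2 * H) := Real.rpow_nonneg (by linarith) _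
    have ha0 : 0 ≤ u ^ (-H) := Real.rpow_nonneg hu0'.le _
    nlinarith [mul_le_mul_of_nonneg_right hle hnn, mul_nonneg ha0 (sq_nonneg (1 - u ^ H))]
end

section
/- Let f: [0,1] → R be Hölder continuous of order λ and g: [0,1] → R be Hölder continuous of order μ with λ + μ > 1. Then the Young integral z_t = ∫_0^t f(s) dg(s) exists for all t ∈ [0,1] and the function t ↦ z_t is Hölder continuous of order μ on [0,1]. -/
/-!
Young's argument. If a partition of `[a, b]` has `n ≥ 2` intervals, two adjacent ones have total
length at most `2 (b - a) / (n - 1)`; deleting the point between them changes the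
Riemann–Stieltjes sum by `(f s₁ - f s₀) (g s₂ - g s₁) = O(((b - a) / (n - 1)) ^ θ)`, `θ = λ + μ`.
Deleting points one at a time, every such sum over `[a, b]` is within `K (b - a) ^ θ` of
`f a (g b - g a)`, with `K = C_f C_g 2 ^ θ ζ(θ)`. Only the defect
`Ξ x z - Ξ x y - Ξ y z = -(f y - f x) (g z - g y)` of `Ξ x y = f x (g y - g x)` enters, through
the bound `|Ξ x z - Ξ x y - Ξ y z| ≤ C_f C_g (z - x) ^ θ`.
Comparing two partitions through their common refinement, interval by interval, their sums
differ by at most `K ∑ |Δ| ^ θ ≤ K mesh ^ (θ - 1) (b - a)`, hence converge as the mesh tends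
to `0`. The estimate on `[p, q]` reads `|z q - z p - f p (g q - g p)| ≤ K (q - p) ^ θ`, which
gives Hölder continuity of order `μ`.
-/

open Real Set Finset Filter Topology

noncomputable section

def partitionSum (Ξ : ℝ → ℝ → ℝ) (s : ℕ → ℝ) (n : ℕ) : ℝ :=
  ∑ i ∈ range n, Ξ (s i) (s (i + 1))

structure IsPartition (s : ℕ → ℝ) (n : ℕ) (a b : ℝ) : Prop where
  zero : s 0 = a
  last : s n = b
  le_succ : ∀ i < n, s i ≤ s (i + 1)

def HasDefectBound (Ξ : ℝ → ℝ → ℝ) (C θ a b : ℝ) : Prop :=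
  ∀ x y z, a ≤ x → x ≤ y → y ≤ z → z ≤ b → |Ξ x z - Ξ x y - Ξ y z| ≤ C * (z - x) ^ θ

variable {Ξ : ℝ → ℝ → ℝ} {C θ a b : ℝ} {s : ℕ → ℝ} {n : ℕ}

lemma HasDefectBound.mono {a' b' : ℝ} (h : HasDefectBound Ξ C θ a b) (ha : a ≤ a') (hb : b' ≤ b) :
    HasDefectBound Ξ C θ a' b' :=
  fun x y z hx hxy hyz hz => h x y z (ha.trans hx) hxy hyz (hz.trans hb)

namespace IsPartition

lemma monotoneOn (hs : IsPartition s n a b) : MonotoneOn s (Set.Iic n) :=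
  monotoneOn_of_le_add_one ordConnected_Iic fun i _ _ hi => hs.le_succ i (Set.mem_Iic.1 hi)

lemma mem_Icc (hs : IsPartition s n a b) {i : ℕ} (hi : i ≤ n) : s i ∈ Icc a b :=
  ⟨hs.zero ▸ hs.monotoneOn (Set.mem_Iic.2 (Nat.zero_le n)) (Set.mem_Iic.2 hi) (Nat.zero_le i),
    hs.last ▸ hs.monotoneOn (Set.mem_Iic.2 hi) (Set.mem_Iic.2 le_rfl) hi⟩

lemma left_le_right (hs : IsPartition s n a b) : a ≤ b :=
  (hs.mem_Icc le_rfl).1.trans_eq hs.last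

lemma exists_two_step_le {m : ℕ} (hs : IsPartition s (m + 2) a b) :
    ∃ j ≤ m, s (j + 2) - s j ≤ 2 * (b - a) / (m + 1) := by
  have htel : ∑ j ∈ range (m + 1), (s (j + 2) - s j) = (s (m + 2) - s 1) + (s (m + 1) - s 0) := by
    rw [← sum_range_sub (fun j => s (j + 1)), ← sum_range_sub s, ← sum_add_distrib]
    exact sum_congr rfl fun j _ => by ring
  have hsum : ∑ j ∈ range (m + 1), (s (j + 2) - s j) ≤
      ∑ _j ∈ range (m + 1), 2 * (b - a) / (m + 1) := by
    rw [htel, sum_const, card_range, nsmul_eq_mul, hs.zero, hs.last]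
    have h1 := (hs.mem_Icc (i := 1) (by omega)).1
    have h2 := (hs.mem_Icc (i := m + 1) (by omega)).2
    rw [Nat.cast_add_one, mul_div_cancel₀ _ (by positivity)]
    linarith
  obtain ⟨j, hj, hle⟩ := exists_le_of_sum_le nonempty_range_add_one hsum
  exact ⟨j, Nat.lt_succ_iff.1 (mem_range.1 hj), hle⟩

end IsPartition

def skipIndex (s : ℕ → ℝ) (j : ℕ) (k : ℕ) : ℝ := s (if k < j then k else k + 1)

lemma IsPartition.skipIndex {m j : ℕ} (hs : IsPartition s (m + 2) a b) (hj : j ≤ m) :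
    IsPartition (skipIndex s (j + 1)) (m + 1) a b where
  zero := by simp [_root_.skipIndex, hs.zero]
  last := by rw [_root_.skipIndex, if_neg (by omega)]; exact hs.last
  le_succ k hk := by
    have key : ∀ i i' : ℕ, i ≤ i' → i' ≤ m + 2 → s i ≤ s i' := fun i i' h h' =>
      hs.monotoneOn (Set.mem_Iic.2 (h.trans h')) (Set.mem_Iic.2 h') h
    unfold _root_.skipIndex
    split_ifs <;> exact key _ _ (by omega) (by omega)

lemma partitionSum_skipIndex (Ξ : ℝ → ℝ → ℝ) (s : ℕ → ℝ) {m j : ℕ} (hj : j ≤ m) :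
    partitionSum Ξ s (m + 2) = partitionSum Ξ (skipIndex s (j + 1)) (m + 1) +
      (Ξ (s j) (s (j + 1)) + Ξ (s (j + 1)) (s (j + 2)) - Ξ (s j) (s (j + 2))) := by
  obtain ⟨r, rfl⟩ := Nat.exists_eq_add_of_le hj
  rw [partitionSum, partitionSum, show j + r + 2 = j + (2 + r) by omega,
    show j + r + 1 = j + (1 + r) by omega, sum_range_add, sum_range_add, sum_range_add,
    sum_range_add]
  have hlow : ∀ k ∈ range j, Ξ (skipIndex s (j + 1) k) (skipIndex s (j + 1) (k + 1)) =
      Ξ (s k) (s (k + 1)) := fun k hk => by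
    have := mem_range.1 hk
    simp only [_root_.skipIndex, if_pos (show k < j + 1 by omega),
      if_pos (show k + 1 < j + 1 by omega)]
  have hhigh : ∀ k ∈ range r, Ξ (skipIndex s (j + 1) (j + (1 + k)))
      (skipIndex s (j + 1) (j + (1 + k) + 1)) = Ξ (s (j + (2 + k))) (s (j + (2 + k) + 1)) :=
    fun k _ => by
      simp only [_root_.skipIndex, if_neg (show ¬ j + (1 + k) < j + 1 by omega),
        if_neg (show ¬ j + (1 + k) + 1 < j + 1 by omega)]
      congr 2 <;> omega
  rw [sum_congr rfl hlow, sum_congr rfl hhigh]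
  simp only [sum_range_succ, sum_range_zero, zero_add, add_zero, _root_.skipIndex,
    Nat.lt_add_one, lt_self_iff_false, if_true, if_false]
  ring

theorem IsPartition.abs_partitionSum_sub_le_sum (hθ : 0 < θ) (hC : 0 ≤ C)
    (hΞ : HasDefectBound Ξ C θ a b) (hs : IsPartition s n a b) :
    |partitionSum Ξ s n - Ξ a b| ≤
      C * (2 * (b - a)) ^ θ * ∑ k ∈ range (n - 1), 1 / ((k : ℝ) + 1) ^ θ := by
  induction n generalizing s with
  | zero =>
    obtain rfl : a = b := hs.zero.symm.trans hs.last
    simpa [partitionSum, zero_rpow hθ.ne'] using hΞ a a a le_rfl le_rfl le_rfl le_rfl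
  | succ n ih =>
    rcases n with _ | m
    · simp [partitionSum, hs.zero, hs.last]
    obtain ⟨j, hj, hgap⟩ := hs.exists_two_step_le
    have hdefect : |Ξ (s j) (s (j + 1)) + Ξ (s (j + 1)) (s (j + 2)) - Ξ (s j) (s (j + 2))| ≤
        C * (2 * (b - a)) ^ θ * (1 / ((m : ℝ) + 1) ^ θ) :=
      calc _ = |Ξ (s j) (s (j + 2)) - Ξ (s j) (s (j + 1)) - Ξ (s (j + 1)) (s (j + 2))| := by
            rw [← abs_neg]; ring_nf
        _ ≤ C * (s (j + 2) - s j) ^ θ :=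
          hΞ _ _ _ (hs.mem_Icc (by omega)).1 (hs.le_succ j (by omega))
            (hs.le_succ (j + 1) (by omega)) (hs.mem_Icc (by omega)).2
        _ ≤ C * (2 * (b - a) / (m + 1)) ^ θ := by
          have : s j ≤ s (j + 2) := (hs.le_succ j (by omega)).trans (hs.le_succ (j + 1) (by omega))
          exact mul_le_mul_of_nonneg_left (rpow_le_rpow (sub_nonneg.2 this) hgap hθ.le) hC
        _ = C * (2 * (b - a)) ^ θ * (1 / ((m : ℝ) + 1) ^ θ) := by
          have := hs.left_le_right
          rw [div_rpow (by linarith) (by positivity)]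
          ring
    rw [partitionSum_skipIndex Ξ s hj, show m + 1 + 1 - 1 = m + 1 by omega, sum_range_succ,
      mul_add, add_sub_right_comm]
    exact (abs_add_le _ _).trans (add_le_add (ih (hs.skipIndex hj)) hdefect)

def sewingConstant (C θ : ℝ) : ℝ := C * 2 ^ θ * ∑' k : ℕ, 1 / ((k : ℝ) + 1) ^ θ

lemma summable_one_div_nat_add_one_rpow (hθ : 1 < θ) :
    Summable fun k : ℕ => 1 / ((k : ℝ) + 1) ^ θ :=
  ((summable_one_div_nat_add_rpow 1 θ).2 hθ).congr fun k => by
    rw [abs_of_nonneg (by positivity)]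

lemma sewingConstant_nonneg (hC : 0 ≤ C) : 0 ≤ sewingConstant C θ := by
  unfold sewingConstant
  positivity

theorem IsPartition.abs_partitionSum_sub_le (hθ : 1 < θ) (hC : 0 ≤ C)
    (hΞ : HasDefectBound Ξ C θ a b) (hs : IsPartition s n a b) :
    |partitionSum Ξ s n - Ξ a b| ≤ sewingConstant C θ * (b - a) ^ θ := by
  have hab := hs.left_le_right
  refine (hs.abs_partitionSum_sub_le_sum (by linarith) hC hΞ).trans ?_
  rw [sewingConstant, mul_rpow zero_le_two (by linarith)]
  have := (summable_one_div_nat_add_one_rpow hθ).sum_le_tsum (range (n - 1))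
    fun k _ => by positivity
  calc _ ≤ C * (2 ^ θ * (b - a) ^ θ) * ∑' k : ℕ, 1 / ((k : ℝ) + 1) ^ θ := by gcongr
    _ = _ := by ring

lemma IsPartition.sum_rpow_le (hs : IsPartition s n a b) (hθ : 1 ≤ θ) {δ : ℝ}
    (hδ : ∀ i < n, s (i + 1) - s i ≤ δ) :
    ∑ i ∈ range n, (s (i + 1) - s i) ^ θ ≤ δ ^ (θ - 1) * (b - a) := by
  rw [← hs.zero, ← hs.last, ← sum_range_sub s, mul_sum]
  refine sum_le_sum fun i hi => ?_
  have hΔ : 0 ≤ s (i + 1) - s i := sub_nonneg.2 (hs.le_succ i (mem_range.1 hi))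
  calc (s (i + 1) - s i) ^ θ = (s (i + 1) - s i) ^ (θ - 1) * (s (i + 1) - s i) := by
        rw [← rpow_add_one' hΔ (by linarith), sub_add_cancel]
    _ ≤ δ ^ (θ - 1) * (s (i + 1) - s i) :=
        mul_le_mul_of_nonneg_right (rpow_le_rpow hΔ (hδ i (mem_range.1 hi)) (by linarith)) hΔ

def clampIcc (c d x : ℝ) : ℝ := max c (min d x)

lemma clampIcc_mono {c d : ℝ} : Monotone (clampIcc c d) :=
  fun _ _ h => max_le_max le_rfl (min_le_min le_rfl h)

lemma clampIcc_of_le {c d x : ℝ} (hx : x ≤ c) (hcd : c ≤ d) : clampIcc c d x = c := by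
  simp [clampIcc, hx, hx.trans hcd]

lemma clampIcc_of_ge {c d x : ℝ} (hx : d ≤ x) (hcd : c ≤ d) : clampIcc c d x = d := by
  simp [clampIcc, hx, hcd]

lemma clampIcc_sub_clampIcc_le {c d x y : ℝ} (hxy : x ≤ y) :
    clampIcc c d y - clampIcc c d x ≤ y - x := by
  simp only [clampIcc, max_def, min_def]
  split_ifs <;> linarith

lemma clampIcc_swap (hΞ0 : ∀ x, Ξ x x = 0) {c d c' d' : ℝ} (hcd : c ≤ d) (hcd' : c' ≤ d') :
    Ξ (clampIcc c d c') (clampIcc c d d') = Ξ (clampIcc c' d' c) (clampIcc c' d' d) := by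
  rcases lt_or_ge d' c with h | h
  · rw [clampIcc_of_le h.le hcd, clampIcc_of_le (h.le.trans' hcd') hcd, hΞ0,
      clampIcc_of_ge (h.le.trans hcd) hcd', clampIcc_of_ge h.le hcd', hΞ0]
  rcases lt_or_ge d c' with h' | h'
  · rw [clampIcc_of_ge h'.le hcd, clampIcc_of_ge (h'.le.trans hcd') hcd, hΞ0,
      clampIcc_of_le (h'.le.trans' hcd) hcd', clampIcc_of_le h'.le hcd', hΞ0]
  simp only [clampIcc]
  rw [min_eq_right h', max_eq_right (le_min hcd h), min_eq_right h,
    max_eq_right (le_min hcd' h'), max_comm c c', min_comm d d']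

variable {u : ℕ → ℝ} {m : ℕ}

lemma IsPartition.clampIcc_comp (hu : IsPartition u m a b) {c d : ℝ} (hac : a ≤ c) (hcd : c ≤ d)
    (hdb : d ≤ b) : IsPartition (fun j => clampIcc c d (u j)) m c d where
  zero := by rw [hu.zero]; exact clampIcc_of_le hac hcd
  last := by rw [hu.last]; exact clampIcc_of_ge hdb hcd
  le_succ j hj := clampIcc_mono (hu.le_succ j hj)

/-- Both sides sum `Ξ` over the pieces `[max (s i) (u j), min (s (i + 1)) (u (j + 1))]` of the
common refinement of `s` and `u`; empty pieces are collapsed to a point and contribute `0`. -/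
lemma sum_partitionSum_clampIcc_comm (hΞ0 : ∀ x, Ξ x x = 0) (hs : ∀ i < n, s i ≤ s (i + 1))
    (hu : ∀ j < m, u j ≤ u (j + 1)) :
    ∑ i ∈ range n, partitionSum Ξ (fun j => clampIcc (s i) (s (i + 1)) (u j)) m =
      ∑ j ∈ range m, partitionSum Ξ (fun i => clampIcc (u j) (u (j + 1)) (s i)) n := by
  simp only [partitionSum]
  rw [sum_comm]
  exact sum_congr rfl fun j hj => sum_congr rfl fun i hi =>
    clampIcc_swap hΞ0 (hs i (mem_range.1 hi)) (hu j (mem_range.1 hj))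

theorem IsPartition.abs_sum_partitionSum_clampIcc_sub_le (hθ : 1 < θ) (hC : 0 ≤ C)
    (hΞ : HasDefectBound Ξ C θ a b) (hs : IsPartition s n a b) (hu : IsPartition u m a b) :
    |∑ j ∈ range m, partitionSum Ξ (fun i => clampIcc (u j) (u (j + 1)) (s i)) n -
        partitionSum Ξ u m| ≤ sewingConstant C θ * ∑ j ∈ range m, (u (j + 1) - u j) ^ θ := by
  rw [partitionSum, ← sum_sub_distrib, mul_sum]
  refine (abs_sum_le_sum_abs _ _).trans (sum_le_sum fun j hj => ?_)
  have hj := mem_range.1 hj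
  have hl := (hu.mem_Icc hj.le).1
  have hr := (hu.mem_Icc hj).2
  exact (hs.clampIcc_comp hl (hu.le_succ j hj) hr).abs_partitionSum_sub_le hθ hC (hΞ.mono hl hr)

theorem IsPartition.abs_partitionSum_sub_partitionSum_le (hθ : 1 < θ) (hC : 0 ≤ C)
    (hΞ0 : ∀ x, Ξ x x = 0) (hΞ : HasDefectBound Ξ C θ a b) (hs : IsPartition s n a b)
    (hu : IsPartition u m a b) {δ δ' : ℝ} (hδ : ∀ i < n, s (i + 1) - s i ≤ δ)
    (hδ' : ∀ j < m, u (j + 1) - u j ≤ δ') :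
    |partitionSum Ξ s n - partitionSum Ξ u m| ≤
      sewingConstant C θ * (δ ^ (θ - 1) + δ' ^ (θ - 1)) * (b - a) := by
  have hs_ref := hu.abs_sum_partitionSum_clampIcc_sub_le hθ hC hΞ hs
  have hu_ref := hs.abs_sum_partitionSum_clampIcc_sub_le hθ hC hΞ hu
  rw [sum_partitionSum_clampIcc_comm hΞ0 hs.le_succ hu.le_succ] at hs_ref
  have hK := sewingConstant_nonneg (θ := θ) hC
  have hs_mesh := mul_le_mul_of_nonneg_left (hs.sum_rpow_le hθ.le hδ) hK
  have hu_mesh := mul_le_mul_of_nonneg_left (hu.sum_rpow_le hθ.le hδ') hK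
  set X := ∑ j ∈ range m, partitionSum Ξ (fun i => clampIcc (u j) (u (j + 1)) (s i)) n
  calc _ = |(X - partitionSum Ξ u m) - (X - partitionSum Ξ s n)| := by ring_nf
    _ ≤ |X - partitionSum Ξ u m| + |X - partitionSum Ξ s n| := abs_sub _ _
    _ ≤ _ := by linarith

theorem IsPartition.abs_partitionSum_clampIcc_add_sub_le (hθ : 1 < θ) (hC : 0 ≤ C)
    (hΞ0 : ∀ x, Ξ x x = 0) (hΞ : HasDefectBound Ξ C θ a b) (hu : IsPartition u m a b) {p : ℝ}
    (hap : a ≤ p) (hpb : p ≤ b) :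
    |partitionSum Ξ (fun j => clampIcc a p (u j)) m + partitionSum Ξ (fun j => clampIcc p b (u j)) m
        - partitionSum Ξ u m| ≤ sewingConstant C θ * ∑ j ∈ range m, (u (j + 1) - u j) ^ θ := by
  have hs : IsPartition (fun i => if i = 0 then a else if i = 1 then p else b) 2 a b :=
    ⟨rfl, rfl, fun i hi => by interval_cases i <;> simp [hap, hpb]⟩
  have := hs.abs_sum_partitionSum_clampIcc_sub_le hθ hC hΞ hu
  rw [← sum_partitionSum_clampIcc_comm hΞ0 hs.le_succ hu.le_succ] at this
  simpa [sum_range_succ] using this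

def uniformPartition (t : ℝ) (m i : ℕ) : ℝ := t * i / (m + 1)

lemma uniformPartition_succ_sub (t : ℝ) (m i : ℕ) :
    uniformPartition t m (i + 1) - uniformPartition t m i = t / (m + 1) := by
  rw [uniformPartition, uniformPartition, ← sub_div]
  push_cast
  ring

lemma isPartition_uniformPartition {t : ℝ} (ht : 0 ≤ t) (m : ℕ) :
    IsPartition (uniformPartition t m) (m + 1) 0 t where
  zero := by simp [uniformPartition]
  last := by rw [uniformPartition]; push_cast; field_simp
  le_succ i _ := by
    have := uniformPartition_succ_sub t m i
    have : 0 ≤ t / (m + 1) := by positivity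
    linarith

lemma tendsto_div_nat_add_one_rpow {γ : ℝ} (hγ : 0 < γ) (t : ℝ) :
    Tendsto (fun m : ℕ => (t / ((m : ℝ) + 1)) ^ γ) atTop (𝓝 0) := by
  refine Tendsto.rpow_const_nhds_zero ?_ hγ
  simpa [div_eq_mul_inv] using tendsto_one_div_add_atTop_nhds_zero_nat.const_mul t

def sewingIntegral (Ξ : ℝ → ℝ → ℝ) (t : ℝ) : ℝ :=
  limUnder atTop fun m : ℕ => partitionSum Ξ (uniformPartition t m) (m + 1)

variable {t : ℝ}

theorem tendsto_partitionSum_uniformPartition (hθ : 1 < θ) (hC : 0 ≤ C) (hΞ0 : ∀ x, Ξ x x = 0)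
    (hΞ : HasDefectBound Ξ C θ 0 t) (ht : 0 ≤ t) :
    Tendsto (fun m : ℕ => partitionSum Ξ (uniformPartition t m) (m + 1)) atTop
      (𝓝 (sewingIntegral Ξ t)) := by
  refine CauchySeq.tendsto_limUnder (cauchySeq_of_le_tendsto_0
    (fun N : ℕ => sewingConstant C θ * (2 * (t / ((N : ℝ) + 1)) ^ (θ - 1)) * t) ?_ ?_)
  · intro m k N hm hk
    have hmesh : ∀ {m : ℕ}, N ≤ m → ∀ i < m + 1,
        uniformPartition t m (i + 1) - uniformPartition t m i ≤ t / (N + 1) := fun hm i _ => by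
      rw [uniformPartition_succ_sub]
      gcongr
    rw [dist_eq]
    refine ((isPartition_uniformPartition ht m).abs_partitionSum_sub_partitionSum_le hθ hC hΞ0 hΞ
      (isPartition_uniformPartition ht k) (hmesh hm) (hmesh hk)).trans_eq ?_
    ring
  · simpa using (((tendsto_div_nat_add_one_rpow (by linarith) t).const_mul 2).const_mul
      (sewingConstant C θ)).mul_const t

theorem IsPartition.abs_partitionSum_sub_sewingIntegral_le (hθ : 1 < θ) (hC : 0 ≤ C)
    (hΞ0 : ∀ x, Ξ x x = 0) (hΞ : HasDefectBound Ξ C θ 0 t) (hs : IsPartition s n 0 t) {δ : ℝ}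
    (hδ : ∀ i < n, s (i + 1) - s i ≤ δ) :
    |partitionSum Ξ s n - sewingIntegral Ξ t| ≤ sewingConstant C θ * δ ^ (θ - 1) * t := by
  have ht := hs.left_le_right
  have hlim := (tendsto_const_nhds (x := partitionSum Ξ s n)).sub
    (tendsto_partitionSum_uniformPartition hθ hC hΞ0 hΞ ht) |>.abs
  have hbound := (((tendsto_div_nat_add_one_rpow (γ := θ - 1) (by linarith) t).const_add
    (δ ^ (θ - 1))).const_mul (sewingConstant C θ)).mul_const (t - 0)
  simpa using le_of_tendsto_of_tendsto' hlim hbound fun m =>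
    hs.abs_partitionSum_sub_partitionSum_le hθ hC hΞ0 hΞ (isPartition_uniformPartition ht m) hδ
      fun i _ => (uniformPartition_succ_sub t m i).le

lemma sewingIntegral_zero (hΞ0 : ∀ x, Ξ x x = 0) : sewingIntegral Ξ 0 = 0 :=
  Tendsto.limUnder_eq (by simp [uniformPartition, partitionSum, hΞ0])

theorem exists_pos_forall_abs_partitionSum_sub_sewingIntegral_lt (hθ : 1 < θ) (hC : 0 ≤ C)
    (hΞ0 : ∀ x, Ξ x x = 0) (hΞ : HasDefectBound Ξ C θ 0 t) {ε : ℝ} (hε : 0 < ε) :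
    ∃ δ > 0, ∀ (n : ℕ) (s : ℕ → ℝ), IsPartition s n 0 t → (∀ i < n, s (i + 1) - s i < δ) →
      |partitionSum Ξ s n - sewingIntegral Ξ t| < ε := by
  have hlim : Tendsto (fun δ : ℝ => sewingConstant C θ * δ ^ (θ - 1) * t) (𝓝[>] 0) (𝓝 0) := by
    simpa using ((tendsto_nhdsWithin_of_tendsto_nhds tendsto_id).rpow_const_nhds_zero
      (p := θ - 1) (by linarith)).const_mul (sewingConstant C θ) |>.mul_const t
  obtain ⟨δ, hδε, hδ⟩ := ((hlim.eventually (gt_mem_nhds hε)).and self_mem_nhdsWithin).exists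
  exact ⟨δ, hδ, fun n s hs hmesh => (hs.abs_partitionSum_sub_sewingIntegral_le hθ hC hΞ0 hΞ
    fun i hi => (hmesh i hi).le).trans_lt hδε⟩

theorem abs_sewingIntegral_sub_sub_le (hθ : 1 < θ) (hC : 0 ≤ C) (hΞ0 : ∀ x, Ξ x x = 0) {p q : ℝ}
    (hΞ : HasDefectBound Ξ C θ 0 q) (hp : 0 ≤ p) (hpq : p ≤ q) :
    |sewingIntegral Ξ q - sewingIntegral Ξ p - Ξ p q| ≤ sewingConstant C θ * (q - p) ^ θ := by
  set K := sewingConstant C θ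
  have hK : 0 ≤ K := sewingConstant_nonneg hC
  have hq : 0 ≤ q := hp.trans hpq
  have hstep : ∀ m : ℕ, |sewingIntegral Ξ q - sewingIntegral Ξ p - Ξ p q| ≤
      K * (q - p) ^ θ + K * (q / (m + 1)) ^ (θ - 1) * (3 * q) := by
    intro m
    have hu := isPartition_uniformPartition hq m
    have hmesh : ∀ i < m + 1, uniformPartition q m (i + 1) - uniformPartition q m i ≤ q / (m + 1) :=
      fun i _ => (uniformPartition_succ_sub q m i).le
    have hsplit := abs_le.1 <| (hu.abs_partitionSum_clampIcc_add_sub_le hθ hC hΞ0 hΞ hp hpq).trans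
      (mul_le_mul_of_nonneg_left (hu.sum_rpow_le hθ.le hmesh) hK)
    have hleft := abs_le.1 <|
      (hu.clampIcc_comp le_rfl hp hpq).abs_partitionSum_sub_sewingIntegral_le hθ hC hΞ0
        (hΞ.mono le_rfl hpq)
      fun i hi => (clampIcc_sub_clampIcc_le (hu.le_succ i hi)).trans (hmesh i hi)
    have hright := abs_le.1 <|
      (hu.clampIcc_comp hp hpq le_rfl).abs_partitionSum_sub_le hθ hC (hΞ.mono hp le_rfl)
    have hwhole := abs_le.1 <| hu.abs_partitionSum_sub_sewingIntegral_le hθ hC hΞ0 hΞ hmesh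
    have hpq' : K * (q / (m + 1)) ^ (θ - 1) * p ≤ K * (q / (m + 1)) ^ (θ - 1) * q :=
      mul_le_mul_of_nonneg_left hpq (mul_nonneg hK (by positivity))
    rw [abs_le]
    constructor <;> linarith
  have hlim := (((tendsto_div_nat_add_one_rpow (γ := θ - 1) (by linarith) q).const_mul K).mul_const
    (3 * q)).const_add (K * (q - p) ^ θ)
  simpa using ge_of_tendsto' hlim hstep

theorem abs_sewingIntegral_sub_le (hθ : 1 < θ) (hC : 0 ≤ C) (hΞ0 : ∀ x, Ξ x x = 0)
    (hΞ : HasDefectBound Ξ C θ 0 1) {μ M : ℝ} (hμ : 0 ≤ μ) (hμθ : μ ≤ θ)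
    (hM : ∀ p q, 0 ≤ p → p ≤ q → q ≤ 1 → |Ξ p q| ≤ M * (q - p) ^ μ) :
    ∀ p ∈ Icc (0 : ℝ) 1, ∀ q ∈ Icc (0 : ℝ) 1,
      |sewingIntegral Ξ q - sewingIntegral Ξ p| ≤ (M + sewingConstant C θ) * |q - p| ^ μ := by
  have hle : ∀ p q, 0 ≤ p → p ≤ q → q ≤ 1 →
      |sewingIntegral Ξ q - sewingIntegral Ξ p| ≤ (M + sewingConstant C θ) * (q - p) ^ μ := by
    intro p q hp hpq hq
    have hsew := abs_sewingIntegral_sub_sub_le hθ hC hΞ0 (hΞ.mono le_rfl hq) hp hpq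
    have hexp := mul_le_mul_of_nonneg_left
      (rpow_le_rpow_of_exponent_ge' (sub_nonneg.2 hpq) (by linarith) hμ hμθ)
      (sewingConstant_nonneg (θ := θ) hC)
    have := abs_sub_abs_le_abs_sub (sewingIntegral Ξ q - sewingIntegral Ξ p) (Ξ p q)
    linarith [hM p q hp hpq hq]
  intro p hp q hq
  rcases le_total p q with h | h
  · rw [abs_of_nonneg (sub_nonneg.2 h)]
    exact hle p q hp.1 h hq.2
  · rw [abs_sub_comm, abs_sub_comm q, abs_of_nonneg (sub_nonneg.2 h)]
    exact hle q p hq.1 h hp.2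

end

section Young

variable {f g : ℝ → ℝ} {Cf Cg lam mu : ℝ}

lemma nonneg_of_holder
    (hf : ∀ s ∈ Icc (0 : ℝ) 1, ∀ t ∈ Icc (0 : ℝ) 1, |f t - f s| ≤ Cf * |t - s| ^ lam) :
    0 ≤ Cf := by
  simpa using (abs_nonneg _).trans (hf 0 (by norm_num) 1 (by norm_num))

lemma hasDefectBound_mul_sub (hlam : 0 ≤ lam) (hmu : 0 ≤ mu) (hCf : 0 ≤ Cf) (hCg : 0 ≤ Cg)
    (hf : ∀ s ∈ Icc (0 : ℝ) 1, ∀ t ∈ Icc (0 : ℝ) 1, |f t - f s| ≤ Cf * |t - s| ^ lam)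
    (hg : ∀ s ∈ Icc (0 : ℝ) 1, ∀ t ∈ Icc (0 : ℝ) 1, |g t - g s| ≤ Cg * |t - s| ^ mu) :
    HasDefectBound (fun x y => f x * (g y - g x)) (Cf * Cg) (lam + mu) 0 1 := by
  intro x y z hx hxy hyz hz
  have hf' : |f y - f x| ≤ Cf * (z - x) ^ lam := by
    refine (hf x ⟨hx, by linarith⟩ y ⟨by linarith, by linarith⟩).trans ?_
    rw [abs_of_nonneg (sub_nonneg.2 hxy)]
    gcongr
  have hg' : |g z - g y| ≤ Cg * (z - x) ^ mu := by
    refine (hg y ⟨by linarith, by linarith⟩ z ⟨by linarith, hz⟩).trans ?_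
    rw [abs_of_nonneg (sub_nonneg.2 hyz)]
    gcongr
  have hzx : 0 ≤ z - x := by linarith
  calc |f x * (g z - g x) - f x * (g y - g x) - f y * (g z - g y)|
      = |f y - f x| * |g z - g y| := by rw [← abs_mul, ← abs_neg]; ring_nf
    _ ≤ Cf * (z - x) ^ lam * (Cg * (z - x) ^ mu) :=
      mul_le_mul hf' hg' (abs_nonneg _) (mul_nonneg hCf (rpow_nonneg hzx _))
    _ = Cf * Cg * (z - x) ^ (lam + mu) := by rw [rpow_add_of_nonneg hzx hlam hmu]; ring

lemma abs_mul_sub_le (hlam : 0 ≤ lam) (hCf : 0 ≤ Cf)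
    (hf : ∀ s ∈ Icc (0 : ℝ) 1, ∀ t ∈ Icc (0 : ℝ) 1, |f t - f s| ≤ Cf * |t - s| ^ lam)
    (hg : ∀ s ∈ Icc (0 : ℝ) 1, ∀ t ∈ Icc (0 : ℝ) 1, |g t - g s| ≤ Cg * |t - s| ^ mu)
    {p q : ℝ} (hp : 0 ≤ p) (hpq : p ≤ q) (hq : q ≤ 1) :
    |f p * (g q - g p)| ≤ (|f 0| + Cf) * Cg * (q - p) ^ mu := by
  have hpI : p ∈ Icc (0 : ℝ) 1 := ⟨hp, hpq.trans hq⟩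
  have hfp : |f p| ≤ |f 0| + Cf := by
    have hp1 : |p - 0| ^ lam ≤ 1 :=
      rpow_le_one (abs_nonneg _) (by rw [sub_zero, abs_of_nonneg hp]; exact hpI.2) hlam
    linarith [abs_sub_abs_le_abs_sub (f p) (f 0), mul_le_of_le_one_right hCf hp1,
      hf 0 ⟨le_rfl, zero_le_one⟩ p hpI]
  have hgq := hg p hpI q ⟨hp.trans hpq, hq⟩
  rw [abs_of_nonneg (sub_nonneg.2 hpq)] at hgq
  rw [abs_mul, mul_assoc]
  exact mul_le_mul hfp hgq (abs_nonneg _) (by positivity)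

end Young

/-- Young integration: if `f` is `λ`-Hölder and `g` is `μ`-Hölder on `[0,1]` with
`λ + μ > 1`, then the Riemann–Stieltjes sums `Σ f(s_i)(g(s_{i+1}) - g(s_i))`
converge (as the mesh tends to `0`) to a limit `z_t = ∫_0^t f dg` for every
`t ∈ [0,1]`, and `t ↦ z_t` is `μ`-Hölder continuous on `[0,1]`. -/
theorem young_integral_exists_and_holder (lam mu : ℝ) (hlam : 0 < lam) (hmu : 0 < mu)
    (hsum : 1 < lam + mu) (f g : ℝ → ℝ) (Cf Cg : ℝ)
    (hf : ∀ s ∈ Set.Icc (0 : ℝ) 1, ∀ t ∈ Set.Icc (0 : ℝ) 1,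
      |f t - f s| ≤ Cf * |t - s| ^ lam)
    (hg : ∀ s ∈ Set.Icc (0 : ℝ) 1, ∀ t ∈ Set.Icc (0 : ℝ) 1,
      |g t - g s| ≤ Cg * |t - s| ^ mu) :
    ∃ z : ℝ → ℝ, z 0 = 0 ∧
      (∀ t ∈ Set.Icc (0 : ℝ) 1, ∀ ε > (0 : ℝ), ∃ δ > (0 : ℝ),
        ∀ (n : ℕ) (s : ℕ → ℝ), s 0 = 0 → s n = t →
          (∀ i < n, s i ≤ s (i + 1)) → (∀ i ≤ n, s i ∈ Set.Icc (0 : ℝ) t) →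
          (∀ i < n, s (i + 1) - s i < δ) →
          |(∑ i ∈ Finset.range n, f (s i) * (g (s (i + 1)) - g (s i))) - z t| < ε) ∧
      ∃ C : ℝ, ∀ s ∈ Set.Icc (0 : ℝ) 1, ∀ t ∈ Set.Icc (0 : ℝ) 1,
        |z t - z s| ≤ C * |t - s| ^ mu := by
  have hCf := nonneg_of_holder hf
  have hCg := nonneg_of_holder hg
  have hC := mul_nonneg hCf hCg
  have hΞ := hasDefectBound_mul_sub hlam.le hmu.le hCf hCg hf hg
  have hΞ0 : ∀ x, f x * (g x - g x) = 0 := fun x => by rw [sub_self, mul_zero]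
  refine ⟨sewingIntegral fun x y => f x * (g y - g x), sewingIntegral_zero hΞ0, ?_, _,
    abs_sewingIntegral_sub_le hsum hC hΞ0 hΞ hmu.le (by linarith)
      fun p q hp hpq hq => abs_mul_sub_le hlam.le hCf hf hg hp hpq hq⟩
  intro t ht ε hε
  obtain ⟨δ, hδ, hclose⟩ :=
    exists_pos_forall_abs_partitionSum_sub_sewingIntegral_lt hsum hC hΞ0 (hΞ.mono le_rfl ht.2) hε
  exact ⟨δ, hδ, fun n s h0 hn hmono _ hmesh => hclose n s ⟨h0, hn, hmono⟩ hmesh⟩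
end
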